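/- arXiv:2009.02714 — 2 statements merged into one kernel-verified Lean document; each statement's English description precedes it below -/
import Mathlib

section
/- Suppose the weight matrix A(·) is repeatedly strongly connected with sequence (t_p) and constant ε > 0, and M := sup over i,j and p of ∫_{t_p}^{t_{p+1}} a_{ij}(t) dt is finite. Then every solution x of the delayed consensus inequality on [t₀,∞) exhibits eventual consensus: there exists c* ∈ [−∞, +∞) such that lim_{t→∞} x_i(t) = c* for every i ∈ [1:n]. -/
open MeasureTheory Set Filter intervalIntegral

noncomputable section

/-- Standing assumptions on the weight functions: measurable,
`0 ≤ a i j t ≤ ā` on `[0,∞)` and `a i i ≡ 0`. -/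
def GoodWeights (n : ℕ) (abar : ℝ) (a : Fin n → Fin n → ℝ → ℝ) : Prop :=
  (∀ i j, Measurable (a i j)) ∧
  (∀ i j, ∀ t : ℝ, 0 ≤ t → 0 ≤ a i j t ∧ a i j t ≤ abar) ∧
  (∀ i, ∀ t : ℝ, 0 ≤ t → a i i t = 0)

/-- Standing assumptions on the delay functions: measurable,
`0 ≤ h i j t ≤ h̄` on `[0,∞)` and `h i i ≡ 0`. -/
def GoodDelays (n : ℕ) (hbar : ℝ) (h : Fin n → Fin n → ℝ → ℝ) : Prop :=
  (∀ i j, Measurable (h i j)) ∧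
  (∀ i j, ∀ t : ℝ, 0 ≤ t → 0 ≤ h i j t ∧ h i j t ≤ hbar) ∧
  (∀ i, ∀ t : ℝ, 0 ≤ t → h i i t = 0)

/-- `x` is bounded on every compact subset of `[t₀ - h̄, ∞)`. -/
def LocBounded (n : ℕ) (t0 hbar : ℝ) (x : ℝ → Fin n → ℝ) : Prop :=
  ∀ T : ℝ, ∃ C : ℝ, ∀ i : Fin n, ∀ s ∈ Icc (t0 - hbar) T, |x s i| ≤ C

/-- `x` is a solution of the delayed consensus differential *inequality* on `[t₀,∞)`:
it is locally bounded on `[t₀ - h̄, ∞)`, absolutely continuous on `[t₀,∞)` with a.e.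
derivative `D` (encoded via the integral representation with locally integrable `D`),
and `D` satisfies the consensus inequality almost everywhere on `[t₀,∞)`. -/
def IsSolIneq (n : ℕ) (a h : Fin n → Fin n → ℝ → ℝ) (hbar t0 : ℝ)
    (x D : ℝ → Fin n → ℝ) : Prop :=
  LocBounded n t0 hbar x ∧
  (∀ i : Fin n, ∀ T : ℝ, IntegrableOn (fun s => D s i) (Icc t0 T)) ∧
  (∀ i : Fin n, ∀ t : ℝ, t0 ≤ t → x t i = x t0 i + ∫ s in t0..t, D s i) ∧
  (∀ᵐ t : ℝ ∂volume, t0 ≤ t → ∀ i : Fin n,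
    D t i ≤ ∑ j : Fin n, a i j t * (x (t - h i j t) j - x t i))

/-- `x` is a solution of the delayed consensus *equation* on `[t₀,∞)`. -/
def IsSolEq (n : ℕ) (a h : Fin n → Fin n → ℝ → ℝ) (hbar t0 : ℝ)
    (x D : ℝ → Fin n → ℝ) : Prop :=
  LocBounded n t0 hbar x ∧
  (∀ i : Fin n, ∀ T : ℝ, IntegrableOn (fun s => D s i) (Icc t0 T)) ∧
  (∀ i : Fin n, ∀ t : ℝ, t0 ≤ t → x t i = x t0 i + ∫ s in t0..t, D s i) ∧
  (∀ᵐ t : ℝ ∂volume, t0 ≤ t → ∀ i : Fin n,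
    D t i = ∑ j : Fin n, a i j t * (x (t - h i j t) j - x t i))

/-- `Λ(t) = max_i sup_{s ∈ [t-h̄, t]} x_i(s)`. -/
def Lam (n : ℕ) (hbar : ℝ) (x : ℝ → Fin n → ℝ) (t : ℝ) : ℝ :=
  ⨆ i : Fin n, sSup ((fun s => x s i) '' Icc (t - hbar) t)

/-- `λ(t) = min_i inf_{s ∈ [t-h̄, t]} x_i(s)`. -/
def lam (n : ℕ) (hbar : ℝ) (x : ℝ → Fin n → ℝ) (t : ℝ) : ℝ :=
  ⨅ i : Fin n, sInf ((fun s => x s i) '' Icc (t - hbar) t)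

/-- Non-instantaneous type-symmetry of the weight matrix with sequence `tp` and
constant `K` (Definition 1). -/
def NonInstTypeSymm (n : ℕ) (a : Fin n → Fin n → ℝ → ℝ) (tp : ℕ → ℝ) (K : ℝ) : Prop :=
  tp 0 = 0 ∧ StrictMono tp ∧ Tendsto tp atTop atTop ∧ 1 ≤ K ∧
  ∀ p : ℕ, ∀ i j : Fin n,
    K⁻¹ * ∫ t in tp p..tp (p + 1), a j i t ≤ (∫ t in tp p..tp (p + 1), a i j t) ∧
    (∫ t in tp p..tp (p + 1), a i j t) ≤ K * ∫ t in tp p..tp (p + 1), a j i t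

/-- The persistent graph `G_∞`, whose arcs are the pairs `(j,i)` with
`∫_0^∞ a_{ij} = ∞` (i.e. `a i j` is not integrable on `[0,∞)`), is connected:
the symmetric reflexive-transitive closure of the arc relation relates any two nodes. -/
def PersGraphConnected (n : ℕ) (a : Fin n → Fin n → ℝ → ℝ) : Prop :=
  ∀ u v : Fin n, Relation.ReflTransGen
    (fun p q => ¬ IntegrableOn (a q p) (Ici 0) ∨ ¬ IntegrableOn (a p q) (Ici 0)) u v

/-- The weight matrix is repeatedly strongly connected with sequence `tp` and
constant `ε` (Definition 2): on each `[t_p, t_{p+1}]`, the graph whose arcs `(j,i)`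
satisfy `∫_{t_p}^{t_{p+1}} a_{ij} ≥ ε` is strongly connected. -/
def RepeatedlyStronglyConnected (n : ℕ) (a : Fin n → Fin n → ℝ → ℝ)
    (tp : ℕ → ℝ) (ε : ℝ) : Prop :=
  tp 0 = 0 ∧ StrictMono tp ∧ Tendsto tp atTop atTop ∧ 0 < ε ∧
  ∀ p : ℕ, ∀ u v : Fin n, Relation.ReflTransGen
    (fun i j => ε ≤ ∫ t in tp p..tp (p + 1), a j i t) u v

/-- The quantity `M = sup_{i,j,p} ∫_{t_p}^{t_{p+1}} a_{ij}` is finite, bounded by `M`. -/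
def MBound (n : ℕ) (a : Fin n → Fin n → ℝ → ℝ) (tp : ℕ → ℝ) (M : ℝ) : Prop :=
  ∀ p : ℕ, ∀ i j : Fin n, (∫ t in tp p..tp (p + 1), a i j t) ≤ M

end

/-! Let `Λ(t)` be the largest value of any component on the delay window `[t - h̄, t]`. Along a
solution, the gap `c - x_i` to any level `c` bounding all components decays at most by a factor
`2` per unit `1/2` of accumulated weight `∫ ∑_j a_ij` (a Grönwall-type bound, obtained by a crossing
argument). Hence no component rises above `Λ(s)` after `s`, so `Λ` is nonincreasing and has a limit
`c* ∈ [-∞, ∞)`. A component that is `δ` below `Λ(s)` drags its out-neighbours in the strongly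
connected graph of the next interval `[t_p, t_{p+1}]` down as well; since the weight of each such
interval is at most `n M`, after `n - 1` intervals and one delay window `Λ` has dropped by `θ δ`,
with `θ > 0` independent of `s` and `δ`. As `Λ` converges, every component tends to `c*`. -/

section Gronwall

variable {a b : ℝ} {w v g : ℝ → ℝ}

theorem one_sub_integral_mul_le (hw : ContinuousOn w (Icc a b))
    (hv : ∀ t ∈ Icc a b, 0 ≤ v t ∧ v t ≤ w t) (hg : ∀ t ∈ Icc a b, 0 ≤ g t)
    (hgi : IntegrableOn g (Icc a b)) (hgv : IntegrableOn (fun t => g t * v t) (Icc a b))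
    (hinc : ∀ s t, a ≤ s → s ≤ t → t ≤ b → w s - ∫ r in s..t, g r * v r ≤ w t)
    {α β : ℝ} (hα : a ≤ α) (hαβ : α ≤ β) (hβ : β ≤ b) :
    (1 - ∫ r in α..β, g r) * w α ≤ w β := by
  have hsub : Icc α β ⊆ Icc a b := Icc_subset_Icc hα hβ
  have hwα : 0 ≤ w α := (hv α (hsub ⟨le_rfl, hαβ⟩)).1.trans (hv α (hsub ⟨le_rfl, hαβ⟩)).2
  -- `σ` is the last time in `[α, β]` at which `w` is still at least `w α`; after it `v ≤ w < w α`.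
  set S := Icc α β ∩ w ⁻¹' Ici (w α)
  have hSbdd : BddAbove S := ⟨β, fun t ht => ht.1.2⟩
  obtain ⟨⟨hασ, hσβ⟩, hwσ⟩ : sSup S ∈ S :=
    ((hw.mono hsub).preimage_isClosed_of_isClosed isClosed_Icc isClosed_Ici).csSup_mem
      ⟨α, ⟨le_rfl, hαβ⟩, le_refl (w α)⟩ hSbdd
  set σ := sSup S
  have hvσβ : ∀ t ∈ Ioo σ β, v t ≤ w α := fun t ht =>
    (hv t (hsub ⟨hασ.trans ht.1.le, ht.2.le⟩)).2.trans <| le_of_not_ge fun h =>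
      ht.1.not_ge (le_csSup hSbdd ⟨⟨hασ.trans ht.1.le, ht.2.le⟩, h⟩)
  have hii : ∀ {s t}, α ≤ s → s ≤ t → t ≤ β → ∀ {f : ℝ → ℝ}, IntegrableOn f (Icc a b) →
      IntervalIntegrable f volume s t := fun h₁ h₂ h₃ _ hf =>
    (intervalIntegrable_iff_integrableOn_Icc_of_le h₂).2
      (hf.mono_set ((Icc_subset_Icc h₁ h₃).trans hsub))
  have hgσβ : ∫ r in σ..β, g r ≤ ∫ r in α..β, g r :=
    integral_mono_interval hασ hσβ le_rfl
      ((ae_restrict_iff' measurableSet_Ioc).2 (ae_of_all _ fun t ht =>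
        hg t (hsub ⟨ht.1.le, ht.2⟩))) (hii le_rfl hαβ le_rfl hgi)
  have hgvσβ : ∫ r in σ..β, g r * v r ≤ (∫ r in σ..β, g r) * w α := by
    rw [← intervalIntegral.integral_mul_const]
    refine integral_mono_on_of_le_Ioo hσβ (hii hασ hσβ le_rfl hgv)
      ((hii hασ hσβ le_rfl hgi).mul_const _) fun t ht => ?_
    exact mul_le_mul_of_nonneg_left (hvσβ t ht) (hg t (hsub ⟨hασ.trans ht.1.le, ht.2.le⟩))
  have hwσ' : w α ≤ w σ := hwσ
  have := hinc σ β (hα.trans hασ) hσβ hβ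
  nlinarith [mul_le_mul_of_nonneg_right hgσβ hwα]

theorem div_two_pow_le_of_integral_le (hw : ContinuousOn w (Icc a b))
    (hv : ∀ t ∈ Icc a b, 0 ≤ v t ∧ v t ≤ w t) (hg : ∀ t ∈ Icc a b, 0 ≤ g t)
    (hgi : IntegrableOn g (Icc a b)) (hgv : IntegrableOn (fun t => g t * v t) (Icc a b))
    (hinc : ∀ s t, a ≤ s → s ≤ t → t ≤ b → w s - ∫ r in s..t, g r * v r ≤ w t)
    {α : ℝ} (hα : a ≤ α) (k : ℕ) :
    ∀ β, α ≤ β → β ≤ b → ∫ r in α..β, g r ≤ k / 2 → w α / 2 ^ k ≤ w β := by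
  induction k with
  | zero =>
    intro β hαβ hβ hmass
    have := one_sub_integral_mul_le hw hv hg hgi hgv hinc hα hαβ hβ
    have hwα := (hv α ⟨hα, hαβ.trans hβ⟩).1.trans (hv α ⟨hα, hαβ.trans hβ⟩).2
    simp only [CharP.cast_eq_zero, zero_div, pow_zero, div_one] at hmass ⊢
    nlinarith
  | succ k ih =>
    intro β hαβ hβ hmass
    have hsub : Icc α β ⊆ Icc a b := Icc_subset_Icc hα hβ
    have hgi' : IntervalIntegrable g volume α β :=
      (intervalIntegrable_iff_integrableOn_Icc_of_le hαβ).2 (hgi.mono_set hsub)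
    have hwnn : ∀ t ∈ Icc a b, 0 ≤ w t := fun t ht => (hv t ht).1.trans (hv t ht).2
    have hG : ContinuousOn (fun t => ∫ r in α..t, g r) (Icc α β) := by
      have := intervalIntegral.continuousOn_primitive_interval (μ := volume) (f := g) (a := α)
        (b := β) (by rw [uIcc_of_le hαβ]; exact hgi.mono_set hsub)
      rwa [uIcc_of_le hαβ] at this
    have hmass_nonneg : 0 ≤ ∫ r in α..β, g r :=
      intervalIntegral.integral_nonneg hαβ fun t ht => hg t (hsub ht)
    -- split `[α, β]` at a point `γ` after which at most mass `1 / 2` is left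
    obtain ⟨γ, ⟨hαγ, hγβ⟩, hγ⟩ := intermediate_value_Icc hαβ hG
      (show min ((k : ℝ) / 2) (∫ r in α..β, g r) ∈ Icc (∫ r in α..α, g r) (∫ r in α..β, g r) by
        rw [intervalIntegral.integral_same]
        exact ⟨le_min (by positivity) hmass_nonneg, min_le_right _ _⟩)
    have hadd : (∫ r in α..γ, g r) + ∫ r in γ..β, g r = ∫ r in α..β, g r :=
      integral_add_adjacent_intervals
        (hgi'.mono_set (by rw [uIcc_of_le hαγ, uIcc_of_le hαβ]; exact Icc_subset_Icc le_rfl hγβ))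
        (hgi'.mono_set (by rw [uIcc_of_le hγβ, uIcc_of_le hαβ]; exact Icc_subset_Icc hαγ le_rfl))
    have hγ' : ∫ r in α..γ, g r = min ((k : ℝ) / 2) (∫ r in α..β, g r) := hγ
    have hrest : ∫ r in γ..β, g r ≤ 1 / 2 := by
      push_cast at hmass
      rcases min_cases ((k : ℝ) / 2) (∫ r in α..β, g r) with ⟨h, -⟩ | ⟨h, -⟩ <;> linarith
    have h₁ : w α / 2 ^ k ≤ w γ := ih γ hαγ (hγβ.trans hβ) (hγ'.trans_le (min_le_left _ _))
    have h₂ := one_sub_integral_mul_le hw hv hg hgi hgv hinc (hα.trans hαγ) hγβ hβ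
    have hwγ := hwnn γ ⟨hα.trans hαγ, hγβ.trans hβ⟩
    rw [pow_succ, ← div_div]
    nlinarith

end Gronwall

theorem Relation.ReflTransGen.exists_rel_mem_notMem {α : Type*} {r : α → α → Prop} {s : Set α}
    {x y : α} (h : Relation.ReflTransGen r x y) (hx : x ∈ s) (hy : y ∉ s) :
    ∃ u ∈ s, ∃ v ∉ s, r u v := by
  induction h with
  | refl => exact absurd hx hy
  | @tail b c _ hbc ih =>
    by_cases hb : b ∈ s
    · exact ⟨b, hb, c, hy, hbc⟩
    · exact ih hb

theorem Finset.sum_mul_sub_le {ι : Type*} [Fintype ι] {a y : ι → ℝ} {c z η : ℝ} (u : ι)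
    (ha : ∀ j, 0 ≤ a j) (hy : ∀ j, y j ≤ c) (hu : y u ≤ c - η) :
    ∑ j, a j * (y j - z) ≤ (∑ j, a j) * (c - z) - η * a u := by
  have hdrop : a u * (c - y u) ≤ ∑ j, a j * (c - y j) :=
    Finset.single_le_sum (fun j _ => mul_nonneg (ha j) (sub_nonneg.2 (hy j))) (Finset.mem_univ u)
  calc ∑ j, a j * (y j - z) = ∑ j, a j * (c - z) - ∑ j, a j * (c - y j) := by
        rw [← Finset.sum_sub_distrib]; congr 1; ext j; ring
    _ ≤ (∑ j, a j) * (c - z) - η * a u := by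
        rw [Finset.sum_mul]; nlinarith [ha u]

def rowSum {n : ℕ} (a : Fin n → Fin n → ℝ → ℝ) (i : Fin n) (t : ℝ) : ℝ := ∑ j, a i j t

namespace GoodWeights

variable {n : ℕ} {abar : ℝ} {a : Fin n → Fin n → ℝ → ℝ} {σ τ : ℝ}

theorem integrableOn (ha : GoodWeights n abar a) (i j : Fin n) (hσ : 0 ≤ σ) :
    IntegrableOn (a i j) (Icc σ τ) :=
  Measure.integrableOn_of_bounded measure_Icc_lt_top.ne (ha.1 i j).aestronglyMeasurable
    (M := abar) <| (ae_restrict_iff' measurableSet_Icc).2 <| ae_of_all _ fun t ht => by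
      have := ha.2.1 i j t (hσ.trans ht.1)
      rw [Real.norm_eq_abs, abs_le]
      constructor <;> linarith

theorem intervalIntegrable (ha : GoodWeights n abar a) (i j : Fin n) (hσ : 0 ≤ σ)
    (hστ : σ ≤ τ) : IntervalIntegrable (a i j) volume σ τ :=
  (intervalIntegrable_iff_integrableOn_Icc_of_le hστ).2 (ha.integrableOn i j hσ)

theorem rowSum_nonneg (ha : GoodWeights n abar a) (i : Fin n) {t : ℝ} (ht : 0 ≤ t) :
    0 ≤ rowSum a i t :=
  Finset.sum_nonneg fun j _ => (ha.2.1 i j t ht).1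

theorem integrableOn_rowSum (ha : GoodWeights n abar a) (i : Fin n) (hσ : 0 ≤ σ) :
    IntegrableOn (rowSum a i) (Icc σ τ) := by
  unfold rowSum
  exact integrable_finsetSum _ fun j _ => ha.integrableOn i j hσ

theorem intervalIntegrable_rowSum (ha : GoodWeights n abar a) (i : Fin n) (hσ : 0 ≤ σ)
    (hστ : σ ≤ τ) : IntervalIntegrable (rowSum a i) volume σ τ :=
  (intervalIntegrable_iff_integrableOn_Icc_of_le hστ).2 (ha.integrableOn_rowSum i hσ)

theorem integral_rowSum_le (ha : GoodWeights n abar a) (i : Fin n) (hσ : 0 ≤ σ)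
    (hστ : σ ≤ τ) : ∫ r in σ..τ, rowSum a i r ≤ n * abar * (τ - σ) := by
  calc ∫ r in σ..τ, rowSum a i r ≤ ∫ _ in σ..τ, (n * abar : ℝ) :=
        integral_mono_on hστ (ha.intervalIntegrable_rowSum i hσ hστ) intervalIntegrable_const
          fun t ht => by
            calc rowSum a i t ≤ ∑ _j : Fin n, abar :=
                  Finset.sum_le_sum fun j _ => (ha.2.1 i j t (hσ.trans ht.1)).2
              _ = n * abar := by simp
    _ = n * abar * (τ - σ) := by simp; ring

theorem integral_rowSum_mono (ha : GoodWeights n abar a) (i : Fin n) {σ' τ' : ℝ}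
    (hσ' : 0 ≤ σ') (hσ : σ' ≤ σ) (hστ : σ ≤ τ) (hτ : τ ≤ τ') :
    ∫ r in σ..τ, rowSum a i r ≤ ∫ r in σ'..τ', rowSum a i r :=
  integral_mono_interval hσ hστ hτ
    ((ae_restrict_iff' measurableSet_Ioc).2 <| ae_of_all _ fun _ ht =>
      ha.rowSum_nonneg i (hσ'.trans ht.1.le))
    (ha.intervalIntegrable_rowSum i hσ' (hσ.trans (hστ.trans hτ)))

theorem integral_rowSum_le_of_mBound (ha : GoodWeights n abar a) {tp : ℕ → ℝ} {M : ℝ}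
    (hM : MBound n a tp M) (i : Fin n) (p : ℕ) (hp : 0 ≤ tp p) (hpp : tp p ≤ tp (p + 1)) :
    ∫ r in tp p..tp (p + 1), rowSum a i r ≤ n * M := by
  unfold rowSum
  rw [intervalIntegral.integral_finsetSum fun j _ => ha.intervalIntegrable i j hp hpp]
  calc ∑ j, ∫ r in tp p..tp (p + 1), a i j r ≤ ∑ _j : Fin n, M :=
        Finset.sum_le_sum fun j _ => hM p i j
    _ = n * M := by simp

end GoodWeights

namespace IsSolIneq

variable {n : ℕ} {a h : Fin n → Fin n → ℝ → ℝ} {abar hbar t0 : ℝ} {x D : ℝ → Fin n → ℝ}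
  {σ τ : ℝ}

theorem intervalIntegrable (hx : IsSolIneq n a h hbar t0 x D) (i : Fin n) (hσ : t0 ≤ σ)
    (hστ : σ ≤ τ) : IntervalIntegrable (fun s => D s i) volume σ τ :=
  (intervalIntegrable_iff_integrableOn_Icc_of_le hστ).2
    ((hx.2.1 i τ).mono_set (Icc_subset_Icc hσ le_rfl))

theorem sub_eq_integral (hx : IsSolIneq n a h hbar t0 x D) (i : Fin n) (hσ : t0 ≤ σ)
    (hστ : σ ≤ τ) : x τ i - x σ i = ∫ r in σ..τ, D r i := by
  rw [hx.2.2.1 i τ (hσ.trans hστ), hx.2.2.1 i σ hσ, ← integral_interval_sub_left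
    (hx.intervalIntegrable i le_rfl (hσ.trans hστ)) (hx.intervalIntegrable i le_rfl hσ)]
  ring

theorem continuousOn (hx : IsSolIneq n a h hbar t0 x D) (i : Fin n) (hσ : t0 ≤ σ) :
    ContinuousOn (fun t => x t i) (Icc σ τ) := by
  have hT : t0 ≤ max τ t0 := le_max_right _ _
  have hprim := intervalIntegral.continuousOn_primitive_interval (μ := volume)
    (f := fun s => D s i) (a := t0) (b := max τ t0) (by rw [uIcc_of_le hT]; exact hx.2.1 i _)
  rw [uIcc_of_le hT] at hprim
  exact (continuousOn_const.add hprim).congr (fun t ht => hx.2.2.1 i t ht.1) |>.mono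
    (Icc_subset_Icc hσ (le_max_left _ _))

theorem sub_le_integral (hx : IsSolIneq n a h hbar t0 x D) (ha : GoodWeights n abar a)
    (hh : GoodDelays n hbar h) (ht0 : 0 ≤ t0) (i u : Fin n) {c η : ℝ} (hσ : t0 ≤ σ)
    (hστ : σ ≤ τ) (hc : ∀ j, ∀ r ∈ Icc (σ - hbar) τ, x r j ≤ c)
    (hu : ∀ r ∈ Icc (σ - hbar) τ, x r u ≤ c - η) :
    x τ i - x σ i ≤ ∫ r in σ..τ, (rowSum a i r * (c - x r i) - η * a i u r) := by
  have hσ0 : 0 ≤ σ := ht0.trans hσ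
  have hint : IntegrableOn (fun r => rowSum a i r * (c - x r i)) (Icc σ τ) :=
    (ha.integrableOn_rowSum i hσ0).mul_continuousOn
      (continuousOn_const.sub (hx.continuousOn i hσ)) isCompact_Icc
  rw [hx.sub_eq_integral i hσ hστ]
  refine integral_mono_ae_restrict hστ (hx.intervalIntegrable i hσ hστ)
    ((intervalIntegrable_iff_integrableOn_Icc_of_le hστ).2
      (hint.sub ((ha.integrableOn i u hσ0).const_mul η))) ?_
  filter_upwards [ae_restrict_mem measurableSet_Icc, ae_restrict_of_ae hx.2.2.2] with r hr hD
  have hr0 : 0 ≤ r := hσ0.trans hr.1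
  have hdelay : ∀ j, r - h i j r ∈ Icc (σ - hbar) τ := fun j => by
    have := hh.2.1 i j r hr0
    constructor <;> linarith [hr.1, hr.2]
  calc D r i ≤ ∑ j, a i j r * (x (r - h i j r) j - x r i) := hD (hσ.trans hr.1) i
    _ ≤ rowSum a i r * (c - x r i) - η * a i u r :=
      Finset.sum_mul_sub_le (a := fun j => a i j r) (y := fun j => x (r - h i j r) j) u
        (fun j => (ha.2.1 i j r hr0).1) (fun j => hc j _ (hdelay j)) (hu _ (hdelay u))

theorem gap_lower_bound (hx : IsSolIneq n a h hbar t0 x D) (ha : GoodWeights n abar a)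
    (hh : GoodDelays n hbar h) (ht0 : 0 ≤ t0) (hhbar : 0 ≤ hbar) (i u : Fin n) {c η : ℝ}
    (hη : 0 ≤ η) (hσ : t0 ≤ σ) (hστ : σ ≤ τ) (hc : ∀ j, ∀ r ∈ Icc (σ - hbar) τ, x r j ≤ c)
    (hu : ∀ r ∈ Icc (σ - hbar) τ, x r u ≤ c - η) {k : ℕ}
    (hmass : ∫ r in σ..τ, rowSum a i r ≤ k / 2) :
    ((c - x σ i) + η * ∫ r in σ..τ, a i u r) / 2 ^ k ≤ c - x τ i := by
  have hσ0 : 0 ≤ σ := ht0.trans hσ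
  have hsub : ∀ {s t}, σ ≤ s → t ≤ τ → Icc (s - hbar) t ⊆ Icc (σ - hbar) τ :=
    fun h₁ h₂ => Icc_subset_Icc (by linarith) h₂
  have haI : ∀ {s t}, σ ≤ s → s ≤ t → IntervalIntegrable (a i u) volume s t :=
    fun h₁ h₂ => ha.intervalIntegrable i u (hσ0.trans h₁) h₂
  have hv : ContinuousOn (fun r => c - x r i) (Icc σ τ) :=
    continuousOn_const.sub (hx.continuousOn i hσ)
  have hgv : IntegrableOn (fun r => rowSum a i r * (c - x r i)) (Icc σ τ) :=
    (ha.integrableOn_rowSum i hσ0).mul_continuousOn hv isCompact_Icc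
  have hprim : ContinuousOn (fun r => ∫ t in r..τ, a i u t) (Icc σ τ) := by
    have := intervalIntegral.continuousOn_primitive_interval_left (μ := volume) (f := a i u)
      (a := σ) (b := τ) (by rw [uIcc_of_le hστ]; exact ha.integrableOn i u hσ0)
    rwa [uIcc_of_le hστ] at this
  -- the gap `c - x i`, plus the part of the extra push from `u` that is still to come
  set w : ℝ → ℝ := fun r => (c - x r i) + η * ∫ t in r..τ, a i u t
  have hinc : ∀ s t, σ ≤ s → s ≤ t → t ≤ τ →
      w s - ∫ r in s..t, rowSum a i r * (c - x r i) ≤ w t := by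
    intro s t hs hst ht
    have h₁ := hx.sub_le_integral ha hh ht0 i u (hσ.trans hs) hst
      (fun j r hr => hc j r (hsub hs ht hr)) (fun r hr => hu r (hsub hs ht hr))
    rw [intervalIntegral.integral_sub ((intervalIntegrable_iff_integrableOn_Icc_of_le hst).2
      (hgv.mono_set (Icc_subset_Icc hs ht))) ((haI hs hst).const_mul η),
      intervalIntegral.integral_const_mul] at h₁
    have h₂ := integral_add_adjacent_intervals (haI hs hst) (haI (hs.trans hst) ht)
    simp only [w, ← h₂]
    linarith
  have hvw : ∀ r ∈ Icc σ τ, 0 ≤ c - x r i ∧ c - x r i ≤ w r := fun r hr =>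
    ⟨sub_nonneg.2 (hc i r ⟨by linarith [hr.1], hr.2⟩),
      le_add_of_nonneg_right (mul_nonneg hη (intervalIntegral.integral_nonneg hr.2
        fun t ht => (ha.2.1 i u t (hσ0.trans (hr.1.trans ht.1))).1))⟩
  simpa [w] using div_two_pow_le_of_integral_le (hv.add (continuousOn_const.mul hprim)) hvw
    (fun r hr => ha.rowSum_nonneg i (hσ0.trans hr.1)) (ha.integrableOn_rowSum i hσ0) hgv hinc
    le_rfl k τ hστ le_rfl hmass

theorem gap_div_pow_le (hx : IsSolIneq n a h hbar t0 x D) (ha : GoodWeights n abar a)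
    (hh : GoodDelays n hbar h) (ht0 : 0 ≤ t0) (hhbar : 0 ≤ hbar) (i : Fin n) {c : ℝ}
    (hσ : t0 ≤ σ) (hστ : σ ≤ τ) (hc : ∀ j, ∀ r ∈ Icc (σ - hbar) τ, x r j ≤ c) {k : ℕ}
    (hmass : ∫ r in σ..τ, rowSum a i r ≤ k / 2) :
    (c - x σ i) / 2 ^ k ≤ c - x τ i := by
  simpa using hx.gap_lower_bound ha hh ht0 hhbar i i le_rfl hσ hστ hc
    (by simpa using hc i) hmass

end IsSolIneq

section Envelope

variable {n : ℕ} {a h : Fin n → Fin n → ℝ → ℝ} {abar hbar t0 : ℝ} {x D : ℝ → Fin n → ℝ}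

theorem LocBounded.le_Lam (hx : LocBounded n t0 hbar x) {s r : ℝ} (hs : t0 ≤ s) (i : Fin n)
    (hr : r ∈ Icc (s - hbar) s) : x r i ≤ Lam n hbar x s := by
  obtain ⟨C, hC⟩ := hx s
  refine (le_csSup ⟨C, ?_⟩ (mem_image_of_mem (fun r => x r i) hr)).trans
    (le_ciSup (f := fun j => sSup ((fun r => x r j) '' Icc (s - hbar) s))
      (Set.finite_range _).bddAbove i)
  rintro _ ⟨r', hr', rfl⟩
  exact (abs_le.1 (hC i r' ⟨by linarith [hr'.1], hr'.2⟩)).2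

theorem Lam_le [Nonempty (Fin n)] (hhbar : 0 ≤ hbar) {t C : ℝ}
    (h : ∀ i, ∀ r ∈ Icc (t - hbar) t, x r i ≤ C) : Lam n hbar x t ≤ C :=
  ciSup_le fun i => csSup_le ((nonempty_Icc.2 (by linarith)).image _)
    (by rintro _ ⟨r, hr, rfl⟩; exact h i r hr)

theorem IsSolIneq.le_Lam (hx : IsSolIneq n a h hbar t0 x D) (ha : GoodWeights n abar a)
    (hh : GoodDelays n hbar h) (ht0 : 0 ≤ t0) (hhbar : 0 ≤ hbar) {s t : ℝ} (hs : t0 ≤ s)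
    (hst : s - hbar ≤ t) (i : Fin n) : x t i ≤ Lam n hbar x s := by
  rcases le_total t s with hts | hst'
  · exact hx.1.le_Lam hs i ⟨hst, hts⟩
  have hmax : ∀ j, ∃ r ∈ Icc s t, ∀ r' ∈ Icc s t, x r' j ≤ x r j := fun j =>
    (isCompact_Icc.exists_isMaxOn (nonempty_Icc.2 hst') (hx.continuousOn j hs)).imp
      fun r hr => ⟨hr.1, fun r' hr' => hr.2 hr'⟩
  choose r hr hrmax using hmax
  obtain ⟨m, -, hm⟩ :=
    Finset.exists_max_image Finset.univ (fun j => x (r j) j) ⟨i, Finset.mem_univ i⟩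
  refine (hrmax i t ⟨hst', le_rfl⟩).trans ((hm i (Finset.mem_univ i)).trans ?_)
  -- the overall maximum `x (r m) m` on `[s, t]`, if above `Λ(s)`, bounds all components on
  -- `[s - h̄, r m]`; the gap estimate from `s` to `r m` then gives `x (r m) m ≤ x s m ≤ Λ(s)`
  by_contra! hlt
  have hc : ∀ j, ∀ r' ∈ Icc (s - hbar) (r m), x r' j ≤ x (r m) m := fun j r' hr' => by
    rcases le_total r' s with h' | h'
    · exact (hx.1.le_Lam hs j ⟨hr'.1, h'⟩).trans hlt.le
    · exact (hrmax j r' ⟨h', hr'.2.trans (hr m).2⟩).trans (hm j (Finset.mem_univ j))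
  set k := ⌈2 * ∫ r' in s..r m, rowSum a m r'⌉₊
  have hgap := hx.gap_div_pow_le ha hh ht0 hhbar m hs (hr m).1 hc (k := k)
    (by linarith [Nat.le_ceil (2 * ∫ r' in s..r m, rowSum a m r')])
  rw [sub_self, div_le_iff₀ (by positivity), zero_mul, sub_nonpos] at hgap
  linarith [hx.1.le_Lam hs m ⟨by linarith, le_rfl⟩]

theorem IsSolIneq.Lam_antitoneOn [Nonempty (Fin n)] (hx : IsSolIneq n a h hbar t0 x D)
    (ha : GoodWeights n abar a) (hh : GoodDelays n hbar h) (ht0 : 0 ≤ t0) (hhbar : 0 ≤ hbar) :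
    AntitoneOn (Lam n hbar x) (Ici t0) := fun s hs _ _ hst =>
  Lam_le hhbar fun i _ hr => hx.le_Lam ha hh ht0 hhbar hs (by linarith [hr.1]) i

end Envelope

theorem GoodWeights.exists_window {n : ℕ} {abar hbar : ℝ} {a : Fin n → Fin n → ℝ → ℝ}
    (ha : GoodWeights n abar a) {tp : ℕ → ℝ} {M : ℝ} (hM : MBound n a tp M) (htp0 : tp 0 = 0)
    (htp : StrictMono tp) (htop : Tendsto tp atTop atTop) (hhbar : 0 ≤ hbar) {τ : ℝ}
    (hτ : 0 ≤ τ) : ∃ q, τ + hbar ≤ tp q ∧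
      ∀ i, ∫ r in τ..tp (q + 1), rowSum a i r ≤ n * abar * hbar + 2 * (n * M) := by
  have hex : ∃ p, τ + hbar < tp (p + 1) :=
    ((htop.comp (tendsto_add_atTop_nat 1)).eventually_gt_atTop _).exists
  obtain ⟨p, hp1, hpmin⟩ : ∃ p, τ + hbar < tp (p + 1) ∧ ∀ m < p, ¬ τ + hbar < tp (m + 1) :=
    ⟨Nat.find hex, Nat.find_spec hex, fun m hm => Nat.find_min hex hm⟩
  have htp_nonneg : ∀ m, 0 ≤ tp m := fun m => htp0 ▸ htp.monotone (Nat.zero_le m)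
  have hstep : ∀ m, tp m ≤ tp (m + 1) := fun m => (htp (Nat.lt_succ_self m)).le
  have hp : tp p ≤ τ + hbar := by
    rcases p with _ | m
    · rw [htp0]; linarith
    · exact not_lt.1 (hpmin m (Nat.lt_succ_self m))
  refine ⟨p + 1, hp1.le, fun i => ?_⟩
  have hI : ∀ {u v}, 0 ≤ u → u ≤ v → IntervalIntegrable (rowSum a i) volume u v :=
    ha.intervalIntegrable_rowSum i
  rw [← integral_add_adjacent_intervals (hI hτ (le_add_of_nonneg_right hhbar))
      (hI (by linarith) (hp1.le.trans (hstep _))),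
    ← integral_add_adjacent_intervals (hI (by linarith) hp1.le) (hI (htp_nonneg _) (hstep _))]
  have h₁ := ha.integral_rowSum_le i hτ (le_add_of_nonneg_right hhbar)
  have h₂ := ha.integral_rowSum_mono i (htp_nonneg p) hp hp1.le le_rfl
  have h₃ := ha.integral_rowSum_le_of_mBound hM i p (htp_nonneg p) (hstep p)
  have h₄ := ha.integral_rowSum_le_of_mBound hM i (p + 1) (htp_nonneg _) (hstep _)
  simp only [add_sub_cancel_left] at h₁
  linarith

theorem exists_tendsto_of_le_of_antitoneOn {ι : Type*} {x : ℝ → ι → ℝ} {L : ℝ → ℝ}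
    {t0 θ : ℝ} (hθ : 0 < θ) (hL : AntitoneOn L (Ici t0)) (hxL : ∀ t, t0 ≤ t → ∀ i, x t i ≤ L t)
    (hdrop : ∀ s, t0 ≤ s → ∀ i δ, 0 < δ → x s i ≤ L s - δ →
      ∃ T, s ≤ T ∧ L T ≤ L s - θ * δ) :
    ∃ c : EReal, c ≠ ⊤ ∧ ∀ i, Tendsto (fun t => (x t i : EReal)) atTop (nhds c) := by
  set f : ℝ → EReal := fun t => (L (max t t0) : EReal)
  have hf : Antitone f := fun t t' htt' => EReal.coe_le_coe_iff.2
    (hL (le_max_right t t0) (le_max_right t' t0) (max_le_max htt' le_rfl))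
  set c := ⨅ t, f t
  have hfc : Tendsto f atTop (nhds c) := tendsto_atTop_iInf hf
  have hfL : ∀ {t}, t0 ≤ t → f t = L t := fun ht => by simp only [f, max_eq_left ht]
  refine ⟨c, ne_top_of_le_ne_top (EReal.coe_ne_top _) (iInf_le f t0), fun i =>
    tendsto_order.2 ⟨fun b hb => ?_, fun b hb => ?_⟩⟩
  · obtain ⟨r, hbr, hrc⟩ := EReal.lt_iff_exists_real_btwn.1 hb
    have hc : c = (c.toReal : EReal) :=
      (EReal.coe_toReal (ne_top_of_le_ne_top (EReal.coe_ne_top _) (iInf_le f t0))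
        (ne_bot_of_gt hrc)).symm
    set c0 := c.toReal
    have hcL : ∀ {t}, t0 ≤ t → c0 ≤ L t := fun ht =>
      EReal.coe_le_coe_iff.1 (hc ▸ hfL ht ▸ iInf_le f _)
    have hδ : 0 < c0 - r := by rw [hc] at hrc; exact sub_pos.2 (EReal.coe_lt_coe_iff.1 hrc)
    have hθδ := mul_pos hθ hδ
    refine Eventually.mono ?_ fun t ht => hbr.trans (EReal.coe_lt_coe_iff.2 ht)
    -- a component staying below `r` infinitely often would push `L` below its limit `c0`
    by_contra hfreq
    have hev : ∀ᶠ t in atTop, f t < (c0 + θ * (c0 - r) / 2 : ℝ) :=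
      hfc.eventually (gt_mem_nhds (by rw [hc]; exact EReal.coe_lt_coe_iff.2 (by linarith)))
    obtain ⟨s, hsx, hsf, hs⟩ :=
      ((not_eventually.1 hfreq).and_eventually (hev.and (eventually_ge_atTop t0))).exists
    rw [hfL hs, EReal.coe_lt_coe_iff] at hsf
    obtain ⟨T, hsT, hT⟩ := hdrop s hs i (c0 - r) hδ (by linarith [hcL hs, not_lt.1 hsx])
    linarith [hcL (hs.trans hsT)]
  · filter_upwards [hfc.eventually (gt_mem_nhds hb), eventually_ge_atTop t0] with t h₁ h₂
    exact (hfL h₂ ▸ EReal.coe_le_coe_iff.2 (hxL t h₂ i)).trans_lt h₁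

namespace IsSolIneq

variable {n : ℕ} {a h : Fin n → Fin n → ℝ → ℝ} {abar hbar t0 : ℝ} {x D : ℝ → Fin n → ℝ}
  {tp : ℕ → ℝ} {ε : ℝ} {s : ℝ}

theorem le_Lam_sub (hx : IsSolIneq n a h hbar t0 x D) (ha : GoodWeights n abar a)
    (hh : GoodDelays n hbar h) (ht0 : 0 ≤ t0) (hhbar : 0 ≤ hbar) {τ t η : ℝ} (hs : t0 ≤ s)
    (hsτ : s ≤ τ) (hτt : τ ≤ t) (j : Fin n) (hj : x τ j ≤ Lam n hbar x s - η) {k : ℕ}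
    (hmass : ∫ r in τ..t, rowSum a j r ≤ k / 2) : x t j ≤ Lam n hbar x s - η / 2 ^ k := by
  have hgap := hx.gap_div_pow_le ha hh ht0 hhbar j (hs.trans hsτ) hτt
    (fun j' r hr => hx.le_Lam ha hh ht0 hhbar hs (by linarith [hr.1]) j') hmass
  have : η / 2 ^ k ≤ (Lam n hbar x s - x τ j) / 2 ^ k := by gcongr; linarith
  linarith

theorem exists_card_lt (hx : IsSolIneq n a h hbar t0 x D) (ha : GoodWeights n abar a)
    (hh : GoodDelays n hbar h) (ht0 : 0 ≤ t0) (hhbar : 0 ≤ hbar)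
    (hconn : RepeatedlyStronglyConnected n a tp ε) {K : ℕ}
    (hK : ∀ τ, t0 ≤ τ → ∃ q, τ + hbar ≤ tp q ∧ ∀ i, ∫ r in τ..tp (q + 1), rowSum a i r ≤ K / 2)
    {ρ : ℝ} (hρε : ρ ≤ ε / 4 ^ K) (hρ1 : ρ ≤ 1 / 2 ^ K) (hs : t0 ≤ s) {τ η : ℝ} (hsτ : s ≤ τ)
    (hη : 0 ≤ η) {S : Finset (Fin n)} (hS : S.Nonempty) (hSu : S ≠ Finset.univ)
    (hlow : ∀ j ∈ S, x τ j ≤ Lam n hbar x s - η) :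
    ∃ S' : Finset (Fin n), S.card < S'.card ∧
      ∃ τ', s ≤ τ' ∧ ∀ j ∈ S', x τ' j ≤ Lam n hbar x s - η * ρ := by
  obtain ⟨q, hq, hmass⟩ := hK τ (hs.trans hsτ)
  have hqq : tp q ≤ tp (q + 1) := (hconn.2.1 (Nat.lt_succ_self q)).le
  have hτ0 : 0 ≤ τ := ht0.trans (hs.trans hsτ)
  have hbelow : ∀ j, ∀ r, s - hbar ≤ r → x r j ≤ Lam n hbar x s :=
    fun j _ hr => hx.le_Lam ha hh ht0 hhbar hs hr j
  have hpers : ∀ j ∈ S, ∀ t ∈ Icc τ (tp (q + 1)), x t j ≤ Lam n hbar x s - η / 2 ^ K :=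
    fun j hj t ht => hx.le_Lam_sub ha hh ht0 hhbar hs hsτ ht.1 j (hlow j hj)
      ((ha.integral_rowSum_mono j hτ0 le_rfl ht.1 ht.2).trans (hmass j))
  obtain ⟨u0, hu0⟩ := hS
  obtain ⟨v0, hv0⟩ : ∃ v, v ∉ S := by
    by_contra! h
    exact hSu (Finset.eq_univ_iff_forall.2 h)
  obtain ⟨u, hu, v, hv, harc⟩ :=
    (hconn.2.2.2.2 q u0 v0).exists_rel_mem_notMem (s := (S : Set (Fin n))) hu0 hv0
  have hnew := hx.gap_lower_bound ha hh ht0 hhbar v u (c := Lam n hbar x s)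
    (div_nonneg hη (by positivity)) (by linarith) hqq
    (fun j r hr => hbelow j r (by linarith [hr.1]))
    (fun r hr => hpers u hu r ⟨by linarith [hr.1], hr.2⟩)
    ((ha.integral_rowSum_mono v hτ0 (by linarith) hqq le_rfl).trans (hmass v))
  have hvq : x (tp q) v ≤ Lam n hbar x s := hbelow v _ (by linarith)
  have hpow : (4 : ℝ) ^ K = 2 ^ K * 2 ^ K := by rw [← mul_pow]; norm_num
  refine ⟨insert v S, by rw [Finset.card_insert_of_notMem hv]; omega, tp (q + 1),
    by linarith, fun j hj => ?_⟩
  rcases Finset.mem_insert.1 hj with rfl | hjS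
  -- `u` stays `η / 2 ^ K` low on the window, pushing `v` down by `η / 2 ^ K * ε` there
  · have : η * ρ ≤ ((Lam n hbar x s - x (tp q) j) +
        η / 2 ^ K * ∫ r in tp q..tp (q + 1), a j u r) / 2 ^ K :=
      calc η * ρ ≤ η * (ε / 4 ^ K) := by gcongr
        _ = (0 + η / 2 ^ K * ε) / 2 ^ K := by rw [hpow]; ring
        _ ≤ _ := by gcongr; linarith
    linarith
  · have : η * ρ ≤ η / 2 ^ K := by
      calc η * ρ ≤ η * (1 / 2 ^ K) := by gcongr
        _ = η / 2 ^ K := by ring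
    linarith [hpers j hjS (tp (q + 1)) ⟨by linarith, le_rfl⟩]

theorem exists_forall_le (hx : IsSolIneq n a h hbar t0 x D) (ha : GoodWeights n abar a)
    (hh : GoodDelays n hbar h) (ht0 : 0 ≤ t0) (hhbar : 0 ≤ hbar)
    (hconn : RepeatedlyStronglyConnected n a tp ε) {K : ℕ}
    (hK : ∀ τ, t0 ≤ τ → ∃ q, τ + hbar ≤ tp q ∧ ∀ i, ∫ r in τ..tp (q + 1), rowSum a i r ≤ K / 2)
    {ρ : ℝ} (hρ : 0 < ρ) (hρε : ρ ≤ ε / 4 ^ K) (hρ1 : ρ ≤ 1 / 2 ^ K) (hs : t0 ≤ s) (m : ℕ) :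
    ∀ (S : Finset (Fin n)) (τ η : ℝ), S.Nonempty → n ≤ S.card + m → s ≤ τ → 0 < η →
      (∀ j ∈ S, x τ j ≤ Lam n hbar x s - η) →
      ∃ τ', s ≤ τ' ∧ ∀ j, x τ' j ≤ Lam n hbar x s - η * ρ ^ m := by
  have hρle : ρ ≤ 1 := hρ1.trans (div_le_one_of_le₀ (one_le_pow₀ one_le_two) (by positivity))
  induction m with
  | zero =>
    intro S τ η _ hcard hsτ _ hlow
    have hSu : S = Finset.univ :=
      Finset.eq_univ_of_card S (le_antisymm (Finset.card_le_univ S) (by simpa using hcard))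
    exact ⟨τ, hsτ, fun j => by simpa using hlow j (hSu ▸ Finset.mem_univ j)⟩
  | succ m ih =>
    intro S τ η hS hcard hsτ hη hlow
    by_cases hSu : S = Finset.univ
    · refine ⟨τ, hsτ, fun j => (hlow j (hSu ▸ Finset.mem_univ j)).trans ?_⟩
      have : ρ ^ (m + 1) ≤ 1 := pow_le_one₀ hρ.le hρle
      nlinarith
    · obtain ⟨S', hcard', τ', hsτ', hlow'⟩ := hx.exists_card_lt ha hh ht0 hhbar hconn hK hρε hρ1
        hs hsτ hη.le hS hSu hlow
      obtain ⟨τ'', hsτ'', hfin⟩ := ih S' τ' (η * ρ)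
        (Finset.card_pos.1 (by omega)) (by omega) hsτ' (mul_pos hη hρ) hlow'
      exact ⟨τ'', hsτ'', fun j => by simpa [pow_succ', mul_assoc] using hfin j⟩

theorem exists_Lam_le_sub_mul [Nonempty (Fin n)] (hx : IsSolIneq n a h hbar t0 x D)
    (ha : GoodWeights n abar a) (hh : GoodDelays n hbar h) (ht0 : 0 ≤ t0) (hhbar : 0 ≤ hbar)
    (hconn : RepeatedlyStronglyConnected n a tp ε) {M : ℝ} (hM : MBound n a tp M) :
    ∃ θ > 0, ∀ s, t0 ≤ s → ∀ i δ, 0 < δ → x s i ≤ Lam n hbar x s - δ →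
      ∃ T, s ≤ T ∧ Lam n hbar x T ≤ Lam n hbar x s - θ * δ := by
  have ⟨htp0, htp, htop, hε, _⟩ := hconn
  set K := ⌈2 * (n * abar * hbar + 2 * (n * M))⌉₊
  have hK : ∀ τ, t0 ≤ τ →
      ∃ q, τ + hbar ≤ tp q ∧ ∀ i, ∫ r in τ..tp (q + 1), rowSum a i r ≤ K / 2 :=
    fun τ hτ => (ha.exists_window hM htp0 htp htop hhbar (ht0.trans hτ)).imp fun _ hq =>
      ⟨hq.1, fun i => (hq.2 i).trans (by linarith [Nat.le_ceil (2 * (n * abar * hbar + 2 * (n * M)))])⟩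
  set ρ := min ε 1 / 4 ^ K
  have hρ : 0 < ρ := by positivity
  have hρε : ρ ≤ ε / 4 ^ K := div_le_div_of_nonneg_right (min_le_left _ _) (by positivity)
  have hρ1 : ρ ≤ 1 / 2 ^ K := div_le_div₀ zero_le_one (min_le_right _ _) (by positivity)
    (pow_le_pow_left₀ zero_le_two (by norm_num) K)
  refine ⟨ρ ^ (n - 1) / 2 ^ K, by positivity, fun s hs i δ hδ hi => ?_⟩
  obtain ⟨τ, hsτ, hall⟩ := hx.exists_forall_le ha hh ht0 hhbar hconn hK hρ
    hρε hρ1 hs (n - 1) {i} s δ (Finset.singleton_nonempty i) (by simp; omega) le_rfl hδ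
    (by simpa using hi)
  obtain ⟨q, hq, hmass⟩ := hK τ (hs.trans hsτ)
  have hqq : tp q ≤ tp (q + 1) := (htp (Nat.lt_succ_self q)).le
  refine ⟨τ + hbar, by linarith, Lam_le hhbar fun j r hr => ?_⟩
  have := hx.le_Lam_sub ha hh ht0 hhbar hs hsτ (t := r) (by linarith [hr.1]) j (hall j)
    ((ha.integral_rowSum_mono j (ht0.trans (hs.trans hsτ)) le_rfl (by linarith [hr.1])
      (by linarith [hr.2])).trans (hmass j))
  linarith [show δ * ρ ^ (n - 1) / 2 ^ K = ρ ^ (n - 1) / 2 ^ K * δ by ring]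

end IsSolIneq

theorem stmt6_general (n : ℕ) (hn : 1 ≤ n) (abar hbar : ℝ) (hhbar : 0 ≤ hbar)
    (a h : Fin n → Fin n → ℝ → ℝ)
    (ha : GoodWeights n abar a) (hh : GoodDelays n hbar h)
    (tp : ℕ → ℝ) (ε : ℝ) (hconn : RepeatedlyStronglyConnected n a tp ε)
    (M : ℝ) (hM : MBound n a tp M)
    (t0 : ℝ) (ht0 : 0 ≤ t0) (x D : ℝ → Fin n → ℝ)
    (hx : IsSolIneq n a h hbar t0 x D) :
    ∃ c : EReal, c ≠ ⊤ ∧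
      ∀ i : Fin n, Tendsto (fun t => ((x t i : ℝ) : EReal)) atTop (nhds c) := by
  have : Nonempty (Fin n) := ⟨⟨0, hn⟩⟩
  obtain ⟨θ, hθ, hdrop⟩ := hx.exists_Lam_le_sub_mul ha hh ht0 hhbar hconn hM
  exact exists_tendsto_of_le_of_antitoneOn hθ (hx.Lam_antitoneOn ha hh ht0 hhbar)
    (fun t ht i => hx.le_Lam ha hh ht0 hhbar ht (by linarith) i) hdrop

theorem stmt6 (n : ℕ) (hn : 1 ≤ n) (abar hbar : ℝ) (habar : 0 ≤ abar) (hhbar : 0 ≤ hbar)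
    (a h : Fin n → Fin n → ℝ → ℝ)
    (ha : GoodWeights n abar a) (hh : GoodDelays n hbar h)
    (tp : ℕ → ℝ) (ε : ℝ) (hconn : RepeatedlyStronglyConnected n a tp ε)
    (M : ℝ) (hM : MBound n a tp M)
    (t0 : ℝ) (ht0 : 0 ≤ t0) (x D : ℝ → Fin n → ℝ)
    (hx : IsSolIneq n a h hbar t0 x D) :
    ∃ c : EReal, c ≠ ⊤ ∧
      ∀ i : Fin n, Tendsto (fun t => ((x t i : ℝ) : EReal)) atTop (nhds c) :=
  stmt6_general n hn abar hbar hhbar a h ha hh tp ε hconn M hM t0 ht0 x D hx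
end

section
/- Let x be a solution of the delayed consensus inequality on [t₀,∞), let τ ≥ t₀, L ∈ ℝ and δ > 0 be such that x_j(s) ≤ L for all j ∈ [1:n] and all s ∈ [τ−h̄,∞), and suppose x_i(τ) ≤ L − δ for some index i. Then for all t ≥ τ: x_i(t) ≤ L − δ·exp(−∫_τ^t α_i(s) ds), where α_i(s) := Σ_{j=1}^n a_{ij}(s). -/
open MeasureTheory Set Filter intervalIntegral

/-! With `α = ∑ j, a i j` and `A s = ∫_τ^s α`, the bound `x_j ≤ L` on `[τ - h̄, ∞)` turns the
consensus inequality into the linear differential inequality `(L - x_i)' ≥ -α (L - x_i)`. Hence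
`(L - x_i) e^A` is absolutely continuous with a.e. nonnegative derivative, so it is
nondecreasing, and comparing its values at `τ` and `t` gives `δ ≤ (L - x_i t) e^{A t}`. -/

namespace AbsolutelyContinuousOnInterval

variable {Y : Type*} [PseudoMetricSpace Y] {a b : ℝ}

theorem comp_lipschitzOnWith {X : Type*} [PseudoMetricSpace X] {f : ℝ → X} {g : X → Y}
    {K : NNReal} {s : Set X}
    (hf : AbsolutelyContinuousOnInterval f a b) (hg : LipschitzOnWith K g s)
    (hfs : MapsTo f (uIcc a b) s) : AbsolutelyContinuousOnInterval (g ∘ f) a b := by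
  have hK : Tendsto (fun E : ℕ × (ℕ → ℝ × ℝ) ↦
      K * ∑ i ∈ Finset.range E.1, dist (f (E.2 i).1) (f (E.2 i).2))
      (totalLengthFilter ⊓ 𝓟 (disjWithin a b)) (nhds 0) := by
    simpa using Tendsto.const_mul (K : ℝ) hf
  refine squeeze_zero' (Eventually.of_forall fun _ ↦ Finset.sum_nonneg fun _ _ ↦ dist_nonneg)
    ?_ hK
  filter_upwards [mem_inf_of_right (mem_principal_self _)] with E hE
  rw [Finset.mul_sum]
  exact Finset.sum_le_sum fun i hi ↦
    hg.dist_le_mul _ (hfs (hE.1 i hi).1) _ (hfs (hE.1 i hi).2)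

theorem comp_locallyLipschitz {E : Type*} [SeminormedAddCommGroup E] {f : ℝ → E} {g : E → Y}
    (hf : AbsolutelyContinuousOnInterval f a b)
    (hg : LocallyLipschitz g) : AbsolutelyContinuousOnInterval (g ∘ f) a b := by
  obtain ⟨K, hK⟩ := hg.locallyLipschitzOn.exists_lipschitzOnWith_of_compact
    (isCompact_uIcc.image_of_continuousOn hf.continuousOn)
  exact hf.comp_lipschitzOnWith hK (mapsTo_image _ _)

theorem le_of_ae_deriv_nonneg {f : ℝ → ℝ}
    (hf : AbsolutelyContinuousOnInterval f a b) (hab : a ≤ b)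
    (hf' : ∀ᵐ x, x ∈ Icc a b → 0 ≤ deriv f x) : f a ≤ f b := by
  have := integral_nonneg_of_ae_restrict hab ((ae_restrict_iff' measurableSet_Icc).2 hf')
  rw [hf.integral_deriv_eq_sub] at this
  linarith

end AbsolutelyContinuousOnInterval

theorem le_mul_exp_integral_of_ae_neg_mul_le {y y' α : ℝ → ℝ} {a b : ℝ} (hab : a ≤ b)
    (hy' : IntervalIntegrable y' volume a b) (hα : IntervalIntegrable α volume a b)
    (hy : ∀ s ∈ Icc a b, y s = y a + ∫ u in a..s, y' u)
    (hle : ∀ᵐ s, s ∈ Icc a b → -(α s * y s) ≤ y' s) :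
    y a ≤ y b * Real.exp (∫ u in a..b, α u) := by
  set Y : ℝ → ℝ := fun s ↦ y a + ∫ u in a..s, y' u
  set A : ℝ → ℝ := fun s ↦ ∫ u in a..s, α u
  have hA : AbsolutelyContinuousOnInterval A a b :=
    hα.absolutelyContinuousOnInterval_intervalIntegral left_mem_uIcc
  have hY : AbsolutelyContinuousOnInterval Y a b :=
    (hy'.absolutelyContinuousOnInterval_intervalIntegral left_mem_uIcc).comp_locallyLipschitz
      (g := fun r ↦ y a + r) (by fun_prop : ContDiff ℝ 1 fun r : ℝ ↦ y a + r).locallyLipschitz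
  have hYexpA : AbsolutelyContinuousOnInterval (fun s ↦ Y s * Real.exp (A s)) a b :=
    hY.mul (hA.comp_locallyLipschitz Real.contDiff_exp.locallyLipschitz)
  have hderiv_nonneg : ∀ᵐ s, s ∈ Icc a b → 0 ≤ deriv (fun s ↦ Y s * Real.exp (A s)) s := by
    filter_upwards [hy'.ae_hasDerivAt_integral, hα.ae_hasDerivAt_integral, hle]
      with s hY' hA' hs hsab
    rw [uIcc_of_le hab] at hY' hA'
    have hderiv : HasDerivAt (fun s ↦ Y s * Real.exp (A s))
        ((y' s + α s * Y s) * Real.exp (A s)) s :=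
      (((hY' hsab a (left_mem_Icc.2 hab)).const_add (y a)).mul
        (hA' hsab a (left_mem_Icc.2 hab)).exp).congr_deriv (by ring)
    rw [hderiv.deriv, show Y s = y s from (hy s hsab).symm]
    exact mul_nonneg (by linarith [hs hsab]) (Real.exp_pos _).le
  have hYb : Y b = y b := (hy b (right_mem_Icc.2 hab)).symm
  simpa [Y, A, hYb] using hYexpA.le_of_ae_deriv_nonneg hab hderiv_nonneg

theorem GoodWeights.intervalIntegrable_s12 {n : ℕ} {abar : ℝ} {a : Fin n → Fin n → ℝ → ℝ}
    (ha : GoodWeights n abar a) (i j : Fin n) {τ t : ℝ} (hτ : 0 ≤ τ) (hτt : τ ≤ t) :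
    IntervalIntegrable (a i j) volume τ t := by
  refine (intervalIntegrable_iff_integrableOn_Icc_of_le hτt).2 <|
    Measure.integrableOn_of_bounded (M := abar) measure_Icc_lt_top.ne
      (ha.1 i j).aestronglyMeasurable ?_
  filter_upwards [ae_restrict_mem measurableSet_Icc] with s hs
  have hs0 : 0 ≤ s := hτ.trans hs.1
  rw [Real.norm_eq_abs, abs_of_nonneg (ha.2.1 i j s hs0).1]
  exact (ha.2.1 i j s hs0).2

theorem GoodWeights.sum_mul_sub_le {n : ℕ} {abar hbar : ℝ} {a h : Fin n → Fin n → ℝ → ℝ}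
    (ha : GoodWeights n abar a) (hh : GoodDelays n hbar h) {x : ℝ → Fin n → ℝ} {τ L s : ℝ}
    (hbound : ∀ j : Fin n, ∀ s ∈ Ici (τ - hbar), x s j ≤ L) (hs0 : 0 ≤ s) (hτs : τ ≤ s)
    (i : Fin n) :
    ∑ j, a i j s * (x (s - h i j s) j - x s i) ≤ (∑ j, a i j s) * (L - x s i) := by
  rw [Finset.sum_mul]
  refine Finset.sum_le_sum fun j _ ↦ mul_le_mul_of_nonneg_left ?_ (ha.2.1 i j s hs0).1
  have := hbound j (s - h i j s) (mem_Ici.2 (by linarith [(hh.2.1 i j s hs0).2]))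
  linarith

section IsSolIneq

variable {n : ℕ} {a h : Fin n → Fin n → ℝ → ℝ} {hbar t0 : ℝ} {x D : ℝ → Fin n → ℝ}

theorem IsSolIneq.intervalIntegrable_s12 (hx : IsSolIneq n a h hbar t0 x D) (i : Fin n)
    {τ t : ℝ} (hτ : t0 ≤ τ) (hτt : τ ≤ t) : IntervalIntegrable (fun s ↦ D s i) volume τ t :=
  (intervalIntegrable_iff_integrableOn_Icc_of_le hτt).2 <|
    (hx.2.1 i t).mono_set (Icc_subset_Icc_left hτ)

theorem IsSolIneq.eq_add_integral (hx : IsSolIneq n a h hbar t0 x D) (i : Fin n)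
    {τ t : ℝ} (hτ : t0 ≤ τ) (hτt : τ ≤ t) : x t i = x τ i + ∫ s in τ..t, D s i := by
  rw [hx.2.2.1 i t (hτ.trans hτt), hx.2.2.1 i τ hτ, add_assoc,
    integral_add_adjacent_intervals (hx.intervalIntegrable_s12 i le_rfl hτ)
      (hx.intervalIntegrable_s12 i hτ hτt)]

end IsSolIneq

theorem stmt12_general (n : ℕ) (abar hbar : ℝ)
    (a h : Fin n → Fin n → ℝ → ℝ)
    (ha : GoodWeights n abar a) (hh : GoodDelays n hbar h)
    (t0 : ℝ) (ht0 : 0 ≤ t0) (x D : ℝ → Fin n → ℝ)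
    (hx : IsSolIneq n a h hbar t0 x D)
    (τ : ℝ) (hτ : t0 ≤ τ) (L δ : ℝ)
    (hbound : ∀ j : Fin n, ∀ s ∈ Ici (τ - hbar), x s j ≤ L)
    (i : Fin n) (hi : x τ i ≤ L - δ) :
    ∀ t : ℝ, τ ≤ t →
      x t i ≤ L - δ * Real.exp (-(∫ s in τ..t, ∑ j : Fin n, a i j s)) := by
  intro t hτt
  have hτ0 : 0 ≤ τ := ht0.trans hτ
  have hα : IntervalIntegrable (fun s ↦ ∑ j, a i j s) volume τ t := by
    simpa only [Finset.sum_fn] using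
      IntervalIntegrable.sum Finset.univ fun j _ ↦ ha.intervalIntegrable_s12 i j hτ0 hτt
  have hgap : L - x τ i ≤ (L - x t i) * Real.exp (∫ s in τ..t, ∑ j : Fin n, a i j s) := by
    refine le_mul_exp_integral_of_ae_neg_mul_le (y := fun s ↦ L - x s i)
      (y' := fun s ↦ -D s i) hτt
      (hx.intervalIntegrable_s12 i hτ hτt).neg hα (fun s hs ↦ ?_) ?_
    · rw [hx.eq_add_integral i hτ hs.1, intervalIntegral.integral_neg]
      ring
    · filter_upwards [hx.2.2.2] with s hs hsτt
      have hτs := hsτt.1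
      linarith [hs (hτ.trans hτs) i, ha.sum_mul_sub_le hh hbound (hτ0.trans hτs) hτs i]
  rw [Real.exp_neg, ← div_eq_mul_inv, le_sub_comm, div_le_iff₀ (Real.exp_pos _)]
  linarith

theorem stmt12 (n : ℕ) (hn : 1 ≤ n) (abar hbar : ℝ) (habar : 0 ≤ abar) (hhbar : 0 ≤ hbar)
    (a h : Fin n → Fin n → ℝ → ℝ)
    (ha : GoodWeights n abar a) (hh : GoodDelays n hbar h)
    (t0 : ℝ) (ht0 : 0 ≤ t0) (x D : ℝ → Fin n → ℝ)
    (hx : IsSolIneq n a h hbar t0 x D)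
    (τ : ℝ) (hτ : t0 ≤ τ) (L δ : ℝ) (hδ : 0 < δ)
    (hbound : ∀ j : Fin n, ∀ s ∈ Ici (τ - hbar), x s j ≤ L)
    (i : Fin n) (hi : x τ i ≤ L - δ) :
    ∀ t : ℝ, τ ≤ t →
      x t i ≤ L - δ * Real.exp (-(∫ s in τ..t, ∑ j : Fin n, a i j s)) :=
  stmt12_general n abar hbar a h ha hh t0 ht0 x D hx τ hτ L δ hbound i hi
end
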